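/- arXiv:1609.03990 — 2 statements merged into one kernel-verified Lean document; each statement's English description precedes it below -/
import Mathlib

section
/- Under the hypotheses that Φ_B : Gr(Φ_A) → S(B) is A-lower semi-continuous and the swapped function f^{A↔B} is K-inf-compact on Gr(Φ_B^{A↔B}), the minimax function v^♯(x) = inf_{a ∈ Φ_A(x)} sup_{b ∈ Φ_B(x,a)} f(x,a,b) is lower semi-continuous on X, the infimum over a is attained for every x, and the set Φ_A*(x) = {a ∈ Φ_A(x) : sup_{b ∈ Φ_B(x,a)} f(x,a,b) = v^♯(x)} is compact whenever v^♯(x) < +∞. -/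
/-!
Write `g(x, a) = sup_{b ∈ Φ_B(x,a)} f(x,a,b)`. Everything follows once `g` is shown to be
sequentially inf-compact on `Gr(Φ_A)`: if `xₙ → x`, `aₙ ∈ Φ_A(xₙ)` and `g(xₙ, aₙ) ≤ λ`, then
`(aₙ)` has a cluster point `a ∈ Φ_A(x)` with `g(x, a) ≤ λ`. To find `a`, use `A`-lower
semicontinuity to pick `bₙ ∈ Φ_B(xₙ, aₙ)` accumulating at some point of `Φ_B(x, ·)`; along a
convergent subsequence the points `(xₙ, bₙ)` form a compact set, over which the `λ`-sublevel
set of `f^{A↔B}` is compact, so `(aₙ)` clusters. To bound `g(x, a)`, take any `b ∈ Φ_B(x, a)`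
and run the same argument with `bₙ` accumulating at `b` and `aₙ → a`.
Lower semicontinuity of `v♯` and compactness of the sublevel sets of `g(x, ·)` are immediate;
the minimizers form the intersection of the nested nonempty compact sets
`{a ∈ Φ_A(x) | g(x, a) ≤ λ}`, `λ > v♯(x)`.
-/

open Filter Topology Set

theorem MapClusterPt.eq_of_tendsto {α X : Type*} [TopologicalSpace X] [T2Space X]
    {F : Filter α} {u : α → X} {x y : X} (hx : MapClusterPt x F u) (hy : Tendsto u F (𝓝 y)) :
    x = y :=
  eq_of_nhds_neBot (hx.clusterPt.mono hy)

section InfCompact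

variable {Y Z : Type*} [TopologicalSpace Y] [TopologicalSpace Z]

def KInfCompactOn (Ψ : Y → Set Z) (g : Y × Z → EReal) : Prop :=
  ∀ C : Set Y, C.Nonempty → IsCompact C → C ⊆ {y | (Ψ y).Nonempty} →
    ∀ l : ℝ, IsCompact {r : Y × Z | r.1 ∈ C ∧ r.2 ∈ Ψ r.1 ∧ g r ≤ l}

theorem KInfCompactOn.exists_mapClusterPt [T2Space Y] {Ψ : Y → Set Z} {g : Y × Z → EReal}
    (hK : KInfCompactOn Ψ g) {y : Y} (hy : (Ψ y).Nonempty) {ys : ℕ → Y}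
    (hys : Tendsto ys atTop (𝓝 y)) {zs : ℕ → Z} (hzs : ∀ n, zs n ∈ Ψ (ys n)) {l : ℝ}
    (hl : ∀ n, g (ys n, zs n) ≤ l) :
    ∃ z ∈ Ψ y, g (y, z) ≤ l ∧ MapClusterPt z atTop zs := by
  have hC : IsCompact (insert y (range ys)) := hys.isCompact_insert_range
  have hCΨ : insert y (range ys) ⊆ {y | (Ψ y).Nonempty} :=
    insert_subset hy (range_subset_iff.2 fun n => ⟨zs n, hzs n⟩)
  obtain ⟨⟨y', z⟩, ⟨-, hz, hzl⟩, hcl⟩ :=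
    (hK _ (insert_nonempty _ _) hC hCΨ l).exists_mapClusterPt (f := atTop)
      (u := fun n => (ys n, zs n)) <| tendsto_principal.2 <|
        Eventually.of_forall fun n => ⟨mem_insert_of_mem _ (mem_range_self n), hzs n, hl n⟩
  obtain rfl : y' = y := (hcl.continuousAt_comp continuous_fst.continuousAt).eq_of_tendsto hys
  exact ⟨z, hz, hzl, hcl.continuousAt_comp continuous_snd.continuousAt⟩

end InfCompact

theorem lowerSemicontinuous_biInf_of_seq {X A : Type*} [TopologicalSpace X]
    [FirstCountableTopology X] {Φ : X → Set A} {g : X → A → EReal}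
    (h : ∀ ⦃x : X⦄ ⦃xs : ℕ → X⦄, Tendsto xs atTop (𝓝 x) → ∀ ⦃as : ℕ → A⦄,
      (∀ n, as n ∈ Φ (xs n)) → ∀ l : ℝ, (∀ n, g (xs n) (as n) ≤ l) → ∃ a ∈ Φ x, g x a ≤ l) :
    LowerSemicontinuous fun x => ⨅ a ∈ Φ x, g x a := by
  intro x y hy
  by_contra hnot
  obtain ⟨xs, hxs, hxsy⟩ := exists_seq_forall_of_frequently (not_eventually.1 hnot)
  obtain ⟨l, hyl, hlx⟩ := EReal.exists_between_coe_real hy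
  have hlt : ∀ n, ∃ a ∈ Φ (xs n), g (xs n) a < l := fun n =>
    lt_biInf_iff.1 ((not_lt.1 (hxsy n)).trans_lt hyl)
  choose as has hasl using hlt
  obtain ⟨a, ha, hal⟩ := h hxs has l fun n => (hasl n).le
  exact (iInf₂_le a ha).trans hal |>.not_gt hlx

section Argmin

variable {A : Type*} {S : Set A} {g : A → EReal}

theorem setOf_eq_biInf_eq_iInter (htop : ⨅ a ∈ S, g a < ⊤) :
    {a | a ∈ S ∧ g a = ⨅ a' ∈ S, g a'} =
      ⋂ l : {l : ℝ // ⨅ a ∈ S, g a < l}, {a | a ∈ S ∧ g a ≤ l} := by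
  ext a
  simp only [mem_iInter, mem_ofPred_eq, Subtype.forall]
  refine ⟨fun ⟨ha, heq⟩ l hl => ⟨ha, heq ▸ hl.le⟩, fun h => ?_⟩
  obtain ⟨l₀, hl₀, -⟩ := EReal.exists_between_coe_real htop
  have ha : a ∈ S := (h l₀ hl₀).1
  exact ⟨ha, le_antisymm (EReal.le_of_forall_lt_iff_le.1 fun l hl => (h l hl).2) (iInf₂_le a ha)⟩

variable [TopologicalSpace A] [T2Space A]

theorem isCompact_setOf_eq_biInf (hg : ∀ l : ℝ, IsCompact {a | a ∈ S ∧ g a ≤ l})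
    (htop : ⨅ a ∈ S, g a < ⊤) : IsCompact {a | a ∈ S ∧ g a = ⨅ a' ∈ S, g a'} := by
  obtain ⟨l₀, hl₀, -⟩ := EReal.exists_between_coe_real htop
  rw [setOf_eq_biInf_eq_iInter htop]
  exact (hg l₀).of_isClosed_subset (isClosed_iInter fun l => (hg l).isClosed)
    (iInter_subset (ι := {l : ℝ // ⨅ a ∈ S, g a < l}) _ ⟨l₀, hl₀⟩)

theorem exists_eq_biInf_of_isCompact_sublevel (hg : ∀ l : ℝ, IsCompact {a | a ∈ S ∧ g a ≤ l})
    (hS : S.Nonempty) : ∃ a ∈ S, g a = ⨅ a' ∈ S, g a' := by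
  rcases (le_top : ⨅ a ∈ S, g a ≤ ⊤).lt_or_eq with htop | htop
  · obtain ⟨l₀, hl₀, -⟩ := EReal.exists_between_coe_real htop
    have : Nonempty {l : ℝ // ⨅ a ∈ S, g a < l} := ⟨⟨l₀, hl₀⟩⟩
    have hne := IsCompact.nonempty_iInter_of_directed_nonempty_isCompact_isClosed
      (fun l : {l : ℝ // ⨅ a ∈ S, g a < l} => {a | a ∈ S ∧ g a ≤ l})
      (Monotone.directed_ge fun l l' hll' a ha => ⟨ha.1, ha.2.trans (EReal.coe_le_coe_iff.2 hll')⟩)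
      (fun l => (lt_biInf_iff.1 l.2).imp fun _ ⟨ha, hal⟩ => ⟨ha, hal.le⟩)
      (fun l => hg l) (fun l => (hg l).isClosed)
    rwa [← setOf_eq_biInf_eq_iInter htop] at hne
  · obtain ⟨a, ha⟩ := hS
    exact ⟨a, ha, le_antisymm (htop ▸ le_top) (iInf₂_le a ha)⟩

end Argmin

section Minimax

variable {X A B : Type*}

def ALowerSemicontinuous [TopologicalSpace X] [TopologicalSpace B] (ΦA : X → Set A)
    (ΦB : X → A → Set B) : Prop :=
  ∀ (x : X) (xs : ℕ → X), Tendsto xs atTop (𝓝 x) →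
    ∀ as : ℕ → A, (∀ n, as n ∈ ΦA (xs n)) →
      ∀ a ∈ ΦA x, ∀ b ∈ ΦB x a,
        ∃ bs : ℕ → B, (∀ n, bs n ∈ ΦB (xs n) (as n)) ∧ MapClusterPt b atTop bs

/-- `f^{A↔B}` is `K`-inf-compact on `Gr(Φ_B^{A↔B})`. -/
def SwapKInfCompact [TopologicalSpace X] [TopologicalSpace A] [TopologicalSpace B]
    (ΦA : X → Set A) (ΦB : X → A → Set B) (f : X × A × B → EReal) : Prop :=
  KInfCompactOn (fun q : X × B => {a | a ∈ ΦA q.1 ∧ q.2 ∈ ΦB q.1 a})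
    fun r => f (r.1.1, r.2, r.1.2)

variable [MetricSpace X] [MetricSpace A] [MetricSpace B]
  {ΦA : X → Set A} {ΦB : X → A → Set B} {f : X × A × B → EReal}

namespace ALowerSemicontinuous

theorem iSup_le_of_tendsto (hAlsc : ALowerSemicontinuous ΦA ΦB)
    (hK : SwapKInfCompact ΦA ΦB f) {x : X} {xs : ℕ → X} (hxs : Tendsto xs atTop (𝓝 x))
    {a : A} (ha : a ∈ ΦA x) {as : ℕ → A} (has : ∀ n, as n ∈ ΦA (xs n))
    (hasa : Tendsto as atTop (𝓝 a)) {l : ℝ}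
    (hl : ∀ n, ⨆ b ∈ ΦB (xs n) (as n), f (xs n, as n, b) ≤ l) :
    ⨆ b ∈ ΦB x a, f (x, a, b) ≤ l := by
  refine iSup₂_le fun b hb => ?_
  obtain ⟨bs, hbs, hbcl⟩ := hAlsc x xs hxs as has a ha b hb
  obtain ⟨τ, hτ, hbsτ⟩ := hbcl.tendsto_subseq
  obtain ⟨a', -, hfl, hcl⟩ := hK.exists_mapClusterPt ⟨a, ha, hb⟩
    ((hxs.comp hτ.tendsto_atTop).prodMk_nhds hbsτ) (zs := as ∘ τ)
    (fun n => ⟨has _, hbs _⟩) (fun n => (le_biSup _ (hbs _)).trans (hl _))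
  obtain rfl : a' = a := hcl.eq_of_tendsto (hasa.comp hτ.tendsto_atTop)
  exact hfl

theorem exists_mem_mapClusterPt (hAlsc : ALowerSemicontinuous ΦA ΦB)
    (hK : SwapKInfCompact ΦA ΦB f) {x : X} (hx : ∃ a ∈ ΦA x, (ΦB x a).Nonempty) {xs : ℕ → X}
    (hxs : Tendsto xs atTop (𝓝 x)) {as : ℕ → A} (has : ∀ n, as n ∈ ΦA (xs n)) {l : ℝ}
    (hl : ∀ n, ⨆ b ∈ ΦB (xs n) (as n), f (xs n, as n, b) ≤ l) :
    ∃ a ∈ ΦA x, MapClusterPt a atTop as := by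
  obtain ⟨a₀, ha₀, b₀, hb₀⟩ := hx
  obtain ⟨bs, hbs, hbcl⟩ := hAlsc x xs hxs as has a₀ ha₀ b₀ hb₀
  obtain ⟨ψ, hψ, hbsψ⟩ := hbcl.tendsto_subseq
  obtain ⟨a, ⟨ha, -⟩, -, hcl⟩ := hK.exists_mapClusterPt ⟨a₀, ha₀, hb₀⟩
    ((hxs.comp hψ.tendsto_atTop).prodMk_nhds hbsψ) (zs := as ∘ ψ)
    (fun n => ⟨has _, hbs _⟩) (fun n => (le_biSup _ (hbs _)).trans (hl _))
  exact ⟨a, ha, hcl.of_comp hψ.tendsto_atTop⟩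

theorem exists_iSup_le_mapClusterPt (hAlsc : ALowerSemicontinuous ΦA ΦB)
    (hK : SwapKInfCompact ΦA ΦB f) {x : X} (hx : ∃ a ∈ ΦA x, (ΦB x a).Nonempty) {xs : ℕ → X}
    (hxs : Tendsto xs atTop (𝓝 x)) {as : ℕ → A} (has : ∀ n, as n ∈ ΦA (xs n)) {l : ℝ}
    (hl : ∀ n, ⨆ b ∈ ΦB (xs n) (as n), f (xs n, as n, b) ≤ l) :
    ∃ a ∈ ΦA x, ⨆ b ∈ ΦB x a, f (x, a, b) ≤ l ∧ MapClusterPt a atTop as := by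
  obtain ⟨a, ha, hcl⟩ := hAlsc.exists_mem_mapClusterPt hK hx hxs has hl
  obtain ⟨φ, hφ, hasφ⟩ := hcl.tendsto_subseq
  exact ⟨a, ha, hAlsc.iSup_le_of_tendsto hK (hxs.comp hφ.tendsto_atTop) ha (fun n => has _)
    hasφ (fun n => hl _), hcl⟩

theorem isCompact_iSup_sublevel (hAlsc : ALowerSemicontinuous ΦA ΦB)
    (hK : SwapKInfCompact ΦA ΦB f) {x : X} (hx : ∃ a ∈ ΦA x, (ΦB x a).Nonempty) (l : ℝ) :
    IsCompact {a | a ∈ ΦA x ∧ ⨆ b ∈ ΦB x a, f (x, a, b) ≤ l} := by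
  refine IsSeqCompact.isCompact fun as has => ?_
  obtain ⟨a, ha, hal, hcl⟩ := hAlsc.exists_iSup_le_mapClusterPt hK hx tendsto_const_nhds
    (fun n => (has n).1) (fun n => (has n).2)
  exact ⟨a, ⟨ha, hal⟩, hcl.tendsto_subseq⟩

end ALowerSemicontinuous

end Minimax

/-- Theorem 3.3: if `Φ_B` is `A`-lower semicontinuous and the swapped function
`f^{A↔B}` is `K`-inf-compact on `Gr(Φ_B^{A↔B})`, then the minimax function
`v♯ x = ⨅ a ∈ Φ_A x, ⨆ b ∈ Φ_B x a, f (x, a, b)` is lower semicontinuous, the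
infimum is attained, and the solution set `Φ_A* x` is compact whenever `v♯ x < +∞`. -/
theorem stmt8 {X A B : Type*} [MetricSpace X] [MetricSpace A] [MetricSpace B]
    (ΦA : X → Set A) (hA : ∀ x, (ΦA x).Nonempty)
    (ΦB : X → A → Set B) (hB : ∀ x, ∀ a ∈ ΦA x, (ΦB x a).Nonempty)
    (hAlsc : ∀ (x : X) (xs : ℕ → X), Tendsto xs atTop (𝓝 x) →
      ∀ as : ℕ → A, (∀ n, as n ∈ ΦA (xs n)) →
        ∀ a ∈ ΦA x, ∀ b ∈ ΦB x a,
          ∃ bs : ℕ → B, (∀ n, bs n ∈ ΦB (xs n) (as n)) ∧ MapClusterPt b atTop bs)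
    (f : X × A × B → EReal)
    (hswap : ∀ C : Set (X × B), C.Nonempty → IsCompact C →
      C ⊆ {q : X × B | ∃ a ∈ ΦA q.1, q.2 ∈ ΦB q.1 a} →
      ∀ l : ℝ, IsCompact {r : (X × B) × A | r.1 ∈ C ∧ r.2 ∈ ΦA r.1.1 ∧
        r.1.2 ∈ ΦB r.1.1 r.2 ∧ f (r.1.1, r.2, r.1.2) ≤ (l : EReal)}) :
    LowerSemicontinuous (fun x => ⨅ a ∈ ΦA x, ⨆ b ∈ ΦB x a, f (x, a, b)) ∧
    (∀ x : X, ∃ a ∈ ΦA x, (⨆ b ∈ ΦB x a, f (x, a, b)) =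
      ⨅ a' ∈ ΦA x, ⨆ b ∈ ΦB x a', f (x, a', b)) ∧
    (∀ x : X, (⨅ a ∈ ΦA x, ⨆ b ∈ ΦB x a, f (x, a, b)) < ⊤ →
      IsCompact {a | a ∈ ΦA x ∧ (⨆ b ∈ ΦB x a, f (x, a, b)) =
        ⨅ a' ∈ ΦA x, ⨆ b ∈ ΦB x a', f (x, a', b)}) := by
  replace hAlsc : ALowerSemicontinuous ΦA ΦB := hAlsc
  have hK : SwapKInfCompact ΦA ΦB f := fun C hC hCc hCΦ l => by
    simpa only [mem_ofPred_eq, and_assoc] using hswap C hC hCc hCΦ l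
  have hx : ∀ x, ∃ a ∈ ΦA x, (ΦB x a).Nonempty := fun x =>
    (hA x).imp fun a ha => ⟨ha, hB x a ha⟩
  have hsub := fun x => hAlsc.isCompact_iSup_sublevel hK (hx x)
  refine ⟨lowerSemicontinuous_biInf_of_seq fun x xs hxs as has l hl => ?_,
    fun x => exists_eq_biInf_of_isCompact_sublevel (hsub x) (hA x),
    fun x => isCompact_setOf_eq_biInf (hsub x)⟩
  obtain ⟨a, ha, hal, -⟩ := hAlsc.exists_iSup_le_mapClusterPt hK (hx x) hxs has hl
  exact ⟨a, ha, hal⟩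
end

section
/- Let X, A, B be metric spaces, Φ_A : X → S(A) lower semi-continuous, Φ_B : Gr(Φ_A) → S(B) A-lower semi-continuous, f : Gr(Φ_B) → ℝ real-valued with f K-sup-compact on Gr(Φ_B) and f^{A↔B} K-inf-compact on Gr(Φ_B^{A↔B}). Then: (1) the worst-loss function f^♯ and the minimax function v^♯ are continuous; (2) the infimum in v^♯(x) = inf_{a ∈ Φ_A(x)} f^♯(x,a) is attained and the solution multifunction Φ_A* : X → S(A) is upper semi-continuous and compact-valued; (3) the suprema defining f^♯ are attained and the solution multifunction Φ_B* is upper semi-continuous and compact-valued. -/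
/-!
Both halves of the theorem are instances of one Berge-type minimum theorem for a function `F`
on the graph of a multifunction `Ψ` over a set `S`: if `Ψ` is lower hemicontinuous, `F` is
continuous on the graph and `K`-inf-compact, then the minimum is attained, the minimum value is
continuous, and the argmin multifunction is compact-valued and upper hemicontinuous.

The inner problem is the case `S = Gr(Φ_A)`, `Ψ = Φ_B`, with `f` read in `ℝᵒᵈ`, where its
`K`-sup-compactness is `K`-inf-compactness; the `K`-inf-compactness of `f^{A↔B}` supplies the
missing lower semicontinuity of `f`. The outer problem is the case `S = X`, `Ψ = Φ_A`, `F = f♯`.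
Here `K`-inf-compactness of `f♯` comes from that of `f^{A↔B}`: if `f♯ (xₙ, aₙ) ≤ l`, approximate
some `b ∈ Φ_B (x, a₀)`, `a₀ ∈ Φ_A x`, by `bₙ ∈ Φ_B (xₙ, aₙ)` using `A`-lower semicontinuity; then
`f (xₙ, aₙ, bₙ) ≤ l`, which yields a cluster point of `(aₙ)` in `Φ_A x`.
-/

open Filter Topology

noncomputable section

variable {X A B : Type*} [MetricSpace X] [MetricSpace A] [MetricSpace B]

/-- The worst-loss function `f♯ (x, a) = ⨆ b ∈ Φ_B x a, f (x, a, b)`. -/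
def fSharp (ΦB : X → A → Set B) (f : X × A × B → ℝ) (p : X × A) : EReal :=
  ⨆ b ∈ ΦB p.1 p.2, (f (p.1, p.2, b) : EReal)

/-- The minimax function `v♯ x = ⨅ a ∈ Φ_A x, f♯ (x, a)`. -/
def vSharp (ΦA : X → Set A) (ΦB : X → A → Set B) (f : X × A × B → ℝ) (x : X) : EReal :=
  ⨅ a ∈ ΦA x, fSharp ΦB f (x, a)

/-- The solution multifunction `Φ_A* x = {a ∈ Φ_A x : f♯ (x, a) = v♯ x}`. -/
def ΦAstar (ΦA : X → Set A) (ΦB : X → A → Set B) (f : X × A × B → ℝ) (x : X) : Set A :=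
  {a | a ∈ ΦA x ∧ fSharp ΦB f (x, a) = vSharp ΦA ΦB f x}

/-- The solution multifunction `Φ_B* (x, a) = {b ∈ Φ_B x a : f (x, a, b) = f♯ (x, a)}`. -/
def ΦBstar (ΦB : X → A → Set B) (f : X × A × B → ℝ) (p : X × A) : Set B :=
  {b | b ∈ ΦB p.1 p.2 ∧ (f (p.1, p.2, b) : EReal) = fSharp ΦB f p}

open Set Function OrderDual

section Topology

variable {Y Z α : Type*} [TopologicalSpace Y] [TopologicalSpace Z]

theorem exists_isMinOn_of_isCompact_sublevel [T2Space Z] [LinearOrder α] {s : Set Z} {g : Z → α}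
    (hs : s.Nonempty) (h : ∀ l, IsCompact {z ∈ s | g z ≤ l}) : ∃ z ∈ s, IsMinOn g s z := by
  obtain ⟨z₀, hz₀⟩ := hs
  have hdir : Directed (· ⊇ ·) fun i : s => {z ∈ s | g z ≤ g i} := fun i j => by
    rcases le_total (g i) (g j) with hij | hij
    · exact ⟨i, subset_rfl, fun z hz => ⟨hz.1, hz.2.trans hij⟩⟩
    · exact ⟨j, fun z hz => ⟨hz.1, hz.2.trans hij⟩, subset_rfl⟩
  have : Nonempty s := ⟨⟨z₀, hz₀⟩⟩
  obtain ⟨z, hz⟩ := IsCompact.nonempty_iInter_of_directed_nonempty_isCompact_isClosed _ hdir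
    (fun i => ⟨i, i.2, le_rfl⟩) (fun i => h _) (fun i => (h _).isClosed)
  exact ⟨z, (mem_iInter.1 hz ⟨z₀, hz₀⟩).1, fun c hc => (mem_iInter.1 hz ⟨c, hc⟩).2⟩

theorem upperSemicontinuousWithinAt_of_seq [FirstCountableTopology Y] [LinearOrder α] {F : Y → α}
    {s : Set Y} {y : Y}
    (h : ∀ u : ℕ → Y, (∀ n, u n ∈ s) → Tendsto u atTop (𝓝 y) →
      ∀ l, (∀ n, l ≤ F (u n)) → l ≤ F y) :
    UpperSemicontinuousWithinAt F s y := by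
  intro l hl
  by_contra hfreq
  obtain ⟨u, huy, hu⟩ :=
    exists_seq_forall_of_frequently ((not_eventually.1 hfreq).and_eventually self_mem_nhdsWithin)
  exact (h u (fun n => (hu n).2) (tendsto_nhds_of_tendsto_nhdsWithin huy) l
    (fun n => not_lt.1 (hu n).1)).not_gt hl

theorem lowerSemicontinuousWithinAt_of_seq [FirstCountableTopology Y] [LinearOrder α] {F : Y → α}
    {s : Set Y} {y : Y}
    (h : ∀ u : ℕ → Y, (∀ n, u n ∈ s) → Tendsto u atTop (𝓝 y) →
      ∀ l, (∀ n, F (u n) ≤ l) → F y ≤ l) :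
    LowerSemicontinuousWithinAt F s y :=
  upperSemicontinuousWithinAt_of_seq (α := αᵒᵈ) h

theorem Filter.Tendsto.prodMk_mapClusterPt {ι : Type*} {l : Filter ι} {u : ι → Y} {zs : ι → Z}
    {y : Y} {z : Z} (hu : Tendsto u l (𝓝 y)) (hz : MapClusterPt z l zs) :
    MapClusterPt (y, z) l fun n => (u n, zs n) := by
  rw [mapClusterPt_iff_frequently]
  intro s hs
  obtain ⟨U, hU, V, hV, hUV⟩ := mem_nhds_prod_iff.1 hs
  exact ((hz.frequently hV).and_eventually (hu hU)).mono fun n hn => hUV ⟨hn.2, hn.1⟩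

theorem MapClusterPt.eq_of_tendsto_s10 [T2Space Y] {ι : Type*} {l : Filter ι} {u : ι → Y} {y y' : Y}
    (hy' : MapClusterPt y' l u) (hu : Tendsto u l (𝓝 y)) : y' = y :=
  eq_of_nhds_neBot (hy'.clusterPt.mono hu)

theorem MapClusterPt.continuousWithinAt_comp {ι : Type*} {l : Filter ι} {u : ι → Y} {y : Y}
    {s : Set Y} {F : Y → Z} (hF : ContinuousWithinAt F s y) (hy : MapClusterPt y l u)
    (hu : ∀ᶠ n in l, u n ∈ s) : MapClusterPt (F y) l (F ∘ u) :=
  hy.tendsto_comp' (hF.tendsto.mono_left (inf_le_inf_left _ (tendsto_principal.2 hu)))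

theorem isCompact_of_forall_mapClusterPt [TopologicalSpace.PseudoMetrizableSpace Z] {s : Set Z}
    (h : ∀ zs : ℕ → Z, (∀ n, zs n ∈ s) → ∃ z ∈ s, MapClusterPt z atTop zs) : IsCompact s :=
  IsSeqCompact.isCompact fun zs hzs =>
    let ⟨z, hz, hc⟩ := h zs hzs
    ⟨z, hz, hc.tendsto_subseq⟩

theorem eventually_subset_of_forall_mapClusterPt [FirstCountableTopology Y] {Φ : Y → Set Z}
    {S : Set Y} {y : Y} {G : Set Z} (hG : IsOpen G) (hΦG : Φ y ⊆ G)
    (h : ∀ u : ℕ → Y, (∀ n, u n ∈ S) → Tendsto u atTop (𝓝 y) →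
      ∀ zs : ℕ → Z, (∀ n, zs n ∈ Φ (u n)) → ∃ z ∈ Φ y, MapClusterPt z atTop zs) :
    ∀ᶠ q in 𝓝[S] y, Φ q ⊆ G := by
  by_contra hfreq
  obtain ⟨u, huy, hu⟩ :=
    exists_seq_forall_of_frequently ((not_eventually.1 hfreq).and_eventually self_mem_nhdsWithin)
  choose zs hzs hzG using fun n => not_subset.1 (hu n).1
  obtain ⟨z, hz, hc⟩ := h u (fun n => (hu n).2) (tendsto_nhds_of_tendsto_nhdsWithin huy) zs hzs
  obtain ⟨n, hn⟩ := (hc.frequently (hG.mem_nhds (hΦG hz))).exists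
  exact hzG n hn

end Topology

section Order

variable {β γ : Type*} {s : Set β} {b : β}

theorem IsMinOn.isLeast_image [Preorder γ] {g : β → γ} (hb : b ∈ s) (h : IsMinOn g s b) :
    IsLeast (g '' s) (g b) :=
  ⟨mem_image_of_mem g hb, forall_mem_image.2 fun _ hc => h hc⟩

theorem IsMaxOn.biSup_eq [CompleteLattice γ] {g : β → γ} (hb : b ∈ s) (h : IsMaxOn g s b) :
    ⨆ c ∈ s, g c = g b :=
  le_antisymm (iSup₂_le fun _ hc => h hc) (le_iSup₂_of_le b hb le_rfl)

theorem IsMinOn.biInf_eq [CompleteLattice γ] {g : β → γ} (hb : b ∈ s) (h : IsMinOn g s b) :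
    ⨅ c ∈ s, g c = g b :=
  IsMaxOn.biSup_eq (γ := γᵒᵈ) hb h

end Order

section Multifunction

variable {Y Z α : Type*} [TopologicalSpace Y] [TopologicalSpace Z] [Preorder α]

def IsKInfCompact (S : Set Y) (Ψ : Y → Set Z) (F : Y → Z → α) : Prop :=
  ∀ C : Set Y, C.Nonempty → IsCompact C → C ⊆ S → ∀ l : α,
    IsCompact {q : Y × Z | q.1 ∈ C ∧ q.2 ∈ Ψ q.1 ∧ F q.1 q.2 ≤ l}

def IsSeqKInfCompact (S : Set Y) (Ψ : Y → Set Z) (F : Y → Z → α) : Prop :=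
  ∀ ⦃y : Y⦄ ⦃u : ℕ → Y⦄ ⦃zs : ℕ → Z⦄ ⦃l : α⦄, y ∈ S → (∀ n, u n ∈ S) →
    Tendsto u atTop (𝓝 y) → (∀ n, zs n ∈ Ψ (u n)) → (∀ᶠ n in atTop, F (u n) (zs n) ≤ l) →
    ∃ z ∈ Ψ y, F y z ≤ l ∧ MapClusterPt z atTop zs

def IsSeqLowerHemicontinuousOn (S : Set Y) (Ψ : Y → Set Z) : Prop :=
  ∀ ⦃y : Y⦄ ⦃u : ℕ → Y⦄, y ∈ S → (∀ n, u n ∈ S) → Tendsto u atTop (𝓝 y) →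
    ∀ z ∈ Ψ y, ∃ zs : ℕ → Z, (∀ n, zs n ∈ Ψ (u n)) ∧ MapClusterPt z atTop zs

variable {S : Set Y} {Ψ : Y → Set Z} {F : Y → Z → α}

theorem IsKInfCompact.isSeqKInfCompact [T2Space Y] (hF : IsKInfCompact S Ψ F) :
    IsSeqKInfCompact S Ψ F := by
  intro y u zs l hy hu huy hzs hl
  obtain ⟨⟨y', z⟩, ⟨-, hz, hzl⟩, hc⟩ :=
    (hF _ (insert_nonempty _ _) huy.isCompact_insert_range
      (insert_subset hy (range_subset_iff.2 hu)) l).exists_mapClusterPt_of_frequently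
      (f := fun n => (u n, zs n))
      (hl.mono fun n hn => ⟨mem_insert_of_mem _ (mem_range_self n), hzs n, hn⟩).frequently
  obtain rfl : y' = y := (hc.continuousAt_comp continuous_fst.continuousAt).eq_of_tendsto_s10 huy
  exact ⟨z, hz, hzl, hc.continuousAt_comp continuous_snd.continuousAt⟩

theorem IsSeqKInfCompact.le_of_tendsto [T2Space Z] (hF : IsSeqKInfCompact S Ψ F) {y : Y}
    {u : ℕ → Y} {zs : ℕ → Z} {z : Z} {l : α} (hy : y ∈ S) (hu : ∀ n, u n ∈ S)
    (huy : Tendsto u atTop (𝓝 y)) (hzs : ∀ n, zs n ∈ Ψ (u n)) (hz : Tendsto zs atTop (𝓝 z))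
    (hl : ∀ n, F (u n) (zs n) ≤ l) : F y z ≤ l := by
  obtain ⟨z', -, hz'l, hc⟩ := hF hy hu huy hzs (Eventually.of_forall hl)
  rwa [← hc.eq_of_tendsto_s10 hz]

end Multifunction

section Berge

variable {Y Z α : Type*} [TopologicalSpace Y] [TopologicalSpace Z] [LinearOrder α]
  {S : Set Y} {Ψ : Y → Set Z} {F : Y → Z → α} {v : Y → α}

theorem IsSeqKInfCompact.isCompact_sublevel [TopologicalSpace.PseudoMetrizableSpace Z]
    (hF : IsSeqKInfCompact S Ψ F) {y : Y} (hy : y ∈ S) (l : α) : IsCompact {z ∈ Ψ y | F y z ≤ l} :=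
  isCompact_of_forall_mapClusterPt fun zs hzs => by
    obtain ⟨z, hz, hzl, hc⟩ := hF hy (fun _ => hy) tendsto_const_nhds (fun n => (hzs n).1)
      (Eventually.of_forall fun n => (hzs n).2)
    exact ⟨z, ⟨hz, hzl⟩, hc⟩

theorem IsSeqKInfCompact.exists_isMinOn [TopologicalSpace.MetrizableSpace Z]
    (hF : IsSeqKInfCompact S Ψ F) {y : Y} (hy : y ∈ S) (hne : (Ψ y).Nonempty) :
    ∃ z ∈ Ψ y, IsMinOn (F y) (Ψ y) z :=
  exists_isMinOn_of_isCompact_sublevel hne (hF.isCompact_sublevel hy)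

theorem IsSeqKInfCompact.lowerSemicontinuousWithinAt_of_isLeast [FirstCountableTopology Y]
    (hF : IsSeqKInfCompact S Ψ F)
    (hv : ∀ y ∈ S, IsLeast (F y '' Ψ y) (v y)) {y : Y} (hy : y ∈ S) :
    LowerSemicontinuousWithinAt v S y := by
  refine lowerSemicontinuousWithinAt_of_seq fun u hu huy l hl => ?_
  choose zs hzs hzv using fun n => (hv _ (hu n)).1
  obtain ⟨z, hz, hzl, -⟩ :=
    hF hy hu huy hzs (Eventually.of_forall fun n => (hzv n).trans_le (hl n))
  exact ((hv y hy).2 ⟨z, hz, rfl⟩).trans hzl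

theorem IsSeqLowerHemicontinuousOn.upperSemicontinuousWithinAt_of_isLeast
    [FirstCountableTopology Y] [TopologicalSpace α] [ClosedIciTopology α]
    (hΨ : IsSeqLowerHemicontinuousOn S Ψ)
    (hcont : ContinuousOn (uncurry F) {q : Y × Z | q.1 ∈ S ∧ q.2 ∈ Ψ q.1})
    (hv : ∀ y ∈ S, IsLeast (F y '' Ψ y) (v y)) {y : Y} (hy : y ∈ S) :
    UpperSemicontinuousWithinAt v S y := by
  refine upperSemicontinuousWithinAt_of_seq fun u hu huy l hl => ?_
  obtain ⟨z, hz, hzv⟩ := (hv y hy).1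
  obtain ⟨zs, hzs, hc⟩ := hΨ hy hu huy z hz
  have hFc := (huy.prodMk_mapClusterPt hc).continuousWithinAt_comp (hcont (y, z) ⟨hy, hz⟩)
    (Eventually.of_forall fun n => ⟨hu n, hzs n⟩)
  rw [← hzv]
  exact isClosed_Ici.mem_of_mapClusterPt hFc
    (Eventually.of_forall fun n => (hl n).trans ((hv _ (hu n)).2 ⟨zs n, hzs n, rfl⟩))

theorem IsSeqKInfCompact.continuousOn_of_isLeast [FirstCountableTopology Y]
    [TopologicalSpace α] [OrderTopology α] (hF : IsSeqKInfCompact S Ψ F)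
    (hΨ : IsSeqLowerHemicontinuousOn S Ψ)
    (hcont : ContinuousOn (uncurry F) {q : Y × Z | q.1 ∈ S ∧ q.2 ∈ Ψ q.1})
    (hv : ∀ y ∈ S, IsLeast (F y '' Ψ y) (v y)) : ContinuousOn v S := fun _ hy =>
  continuousWithinAt_iff_lower_upperSemicontinuousWithinAt.2
    ⟨hF.lowerSemicontinuousWithinAt_of_isLeast hv hy,
      hΨ.upperSemicontinuousWithinAt_of_isLeast hcont hv hy⟩

theorem IsSeqKInfCompact.exists_mapClusterPt_mem_argmin [FirstCountableTopology Y]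
    [TopologicalSpace α] [OrderTopology α] (hF : IsSeqKInfCompact S Ψ F)
    (hΨ : IsSeqLowerHemicontinuousOn S Ψ)
    (hcont : ContinuousOn (uncurry F) {q : Y × Z | q.1 ∈ S ∧ q.2 ∈ Ψ q.1})
    (hv : ∀ y ∈ S, IsLeast (F y '' Ψ y) (v y)) {y : Y} (hy : y ∈ S) {u : ℕ → Y}
    (hu : ∀ n, u n ∈ S) (huy : Tendsto u atTop (𝓝 y)) {zs : ℕ → Z}
    (hzs : ∀ n, zs n ∈ {z ∈ Ψ (u n) | F (u n) z = v (u n)}) :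
    ∃ z ∈ {z ∈ Ψ y | F y z = v y}, MapClusterPt z atTop zs := by
  have hvu : Tendsto (fun n => v (u n)) atTop (𝓝 (v y)) :=
    ((hF.continuousOn_of_isLeast hΨ hcont hv) y hy).tendsto.comp
      (tendsto_nhdsWithin_iff.2 ⟨huy, Eventually.of_forall hu⟩)
  obtain ⟨l, hl⟩ := hvu.isBoundedUnder_le
  obtain ⟨z, hz, -, hc⟩ := hF hy hu huy (fun n => (hzs n).1)
    ((eventually_map.1 hl).mono fun n hn => (hzs n).2.trans_le hn)
  have hFc := (huy.prodMk_mapClusterPt hc).continuousWithinAt_comp (hcont (y, z) ⟨hy, hz⟩)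
    (Eventually.of_forall fun n => ⟨hu n, (hzs n).1⟩)
  exact ⟨z, ⟨hz, hFc.eq_of_tendsto_s10 (hvu.congr fun n => (hzs n).2.symm)⟩, hc⟩

theorem IsSeqKInfCompact.isCompact_argmin [FirstCountableTopology Y]
    [TopologicalSpace.PseudoMetrizableSpace Z] [TopologicalSpace α] [OrderTopology α]
    (hF : IsSeqKInfCompact S Ψ F) (hΨ : IsSeqLowerHemicontinuousOn S Ψ)
    (hcont : ContinuousOn (uncurry F) {q : Y × Z | q.1 ∈ S ∧ q.2 ∈ Ψ q.1})
    (hv : ∀ y ∈ S, IsLeast (F y '' Ψ y) (v y)) {y : Y} (hy : y ∈ S) :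
    IsCompact {z ∈ Ψ y | F y z = v y} :=
  isCompact_of_forall_mapClusterPt fun _ hzs =>
    hF.exists_mapClusterPt_mem_argmin hΨ hcont hv hy (fun _ => hy) tendsto_const_nhds hzs

theorem IsSeqKInfCompact.exists_nhds_argmin_subset [FirstCountableTopology Y]
    [TopologicalSpace α] [OrderTopology α] (hF : IsSeqKInfCompact S Ψ F)
    (hΨ : IsSeqLowerHemicontinuousOn S Ψ)
    (hcont : ContinuousOn (uncurry F) {q : Y × Z | q.1 ∈ S ∧ q.2 ∈ Ψ q.1})
    (hv : ∀ y ∈ S, IsLeast (F y '' Ψ y) (v y)) {y : Y} (hy : y ∈ S) {G : Set Z}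
    (hG : IsOpen G) (hsub : {z ∈ Ψ y | F y z = v y} ⊆ G) :
    ∃ U ∈ 𝓝 y, ∀ q ∈ U ∩ S, {z ∈ Ψ q | F q z = v q} ⊆ G :=
  mem_nhdsWithin_iff_exists_mem_nhds_inter.1 <| eventually_subset_of_forall_mapClusterPt hG hsub
    fun _ hu huy _ hzs => hF.exists_mapClusterPt_mem_argmin hΨ hcont hv hy hu huy hzs

end Berge

def fSharpReal (ΦB : X → A → Set B) (f : X × A × B → ℝ) (p : X × A) : ℝ :=
  (fSharp ΦB f p).toReal

def vSharpReal (ΦA : X → Set A) (ΦB : X → A → Set B) (f : X × A × B → ℝ) (x : X) : ℝ :=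
  (vSharp ΦA ΦB f x).toReal

section Game

variable {ΦA : X → Set A} {ΦB : X → A → Set B} {f : X × A × B → ℝ}
  (hA : ∀ x, (ΦA x).Nonempty) (hB : ∀ x, ∀ a ∈ ΦA x, (ΦB x a).Nonempty)
  (hAlscmap : ∀ (x : X) (xs : ℕ → X), Tendsto xs atTop (𝓝 x) →
    ∀ a ∈ ΦA x, ∃ as : ℕ → A, (∀ n, as n ∈ ΦA (xs n)) ∧ MapClusterPt a atTop as)
  (hAlscB : ∀ (x : X) (xs : ℕ → X), Tendsto xs atTop (𝓝 x) →
    ∀ as : ℕ → A, (∀ n, as n ∈ ΦA (xs n)) →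
      ∀ a ∈ ΦA x, ∀ b ∈ ΦB x a,
        ∃ bs : ℕ → B, (∀ n, bs n ∈ ΦB (xs n) (as n)) ∧ MapClusterPt b atTop bs)
  (hsup : IsSeqKInfCompact {p : X × A | p.2 ∈ ΦA p.1} (fun p => ΦB p.1 p.2)
    fun p b => toDual (f (p.1, p.2, b)))
  (hswap : IsSeqKInfCompact {q : X × B | ∃ a ∈ ΦA q.1, q.2 ∈ ΦB q.1 a}
    (fun q => {a | a ∈ ΦA q.1 ∧ q.2 ∈ ΦB q.1 a}) fun q a => f (q.1, a, q.2))

include hsup hswap in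
theorem continuousOn_f_graph :
    ContinuousOn (fun q : (X × A) × B => f (q.1.1, q.1.2, q.2))
      {q | q.1 ∈ {p : X × A | p.2 ∈ ΦA p.1} ∧ q.2 ∈ ΦB q.1.1 q.1.2} := fun q hq =>
  continuousWithinAt_iff_lower_upperSemicontinuousWithinAt.2
    ⟨lowerSemicontinuousWithinAt_of_seq fun u hu huq _ hl =>
      hswap.le_of_tendsto (y := (q.1.1, q.2)) (u := fun n => ((u n).1.1, (u n).2))
        ⟨q.1.2, hq.1, hq.2⟩ (fun n => ⟨(u n).1.2, (hu n).1, (hu n).2⟩)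
        (huq.fst_nhds.fst_nhds.prodMk_nhds huq.snd_nhds) (fun n => ⟨(hu n).1, (hu n).2⟩)
        huq.fst_nhds.snd_nhds hl,
    upperSemicontinuousWithinAt_of_seq fun _ hu huq _ hl =>
      hsup.le_of_tendsto hq.1 (fun n => (hu n).1) huq.fst_nhds (fun n => (hu n).2)
        huq.snd_nhds hl⟩

include hB hsup in
theorem exists_isMaxOn_fSharp_eq {p : X × A} (hp : p.2 ∈ ΦA p.1) :
    ∃ b ∈ ΦB p.1 p.2, IsMaxOn (fun b => f (p.1, p.2, b)) (ΦB p.1 p.2) b ∧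
      fSharp ΦB f p = f (p.1, p.2, b) := by
  obtain ⟨b, hb, hmax⟩ := hsup.exists_isMinOn hp (hB _ _ hp)
  have hmax : IsMaxOn (fun b => f (p.1, p.2, b)) (ΦB p.1 p.2) b := hmax
  exact ⟨b, hb, hmax, (hmax.comp_mono EReal.coe_strictMono.monotone).biSup_eq hb⟩

include hB hsup in
theorem fSharp_eq_fSharpReal {p : X × A} (hp : p.2 ∈ ΦA p.1) :
    fSharp ΦB f p = fSharpReal ΦB f p := by
  obtain ⟨b, -, -, hfs⟩ := exists_isMaxOn_fSharp_eq hB hsup hp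
  rw [fSharpReal, hfs, EReal.toReal_coe]

include hB hsup in
theorem exists_isMaxOn_eq_fSharpReal {p : X × A} (hp : p.2 ∈ ΦA p.1) :
    ∃ b ∈ ΦB p.1 p.2, IsMaxOn (fun b => f (p.1, p.2, b)) (ΦB p.1 p.2) b ∧
      f (p.1, p.2, b) = fSharpReal ΦB f p := by
  obtain ⟨b, hb, hmax, hfs⟩ := exists_isMaxOn_fSharp_eq hB hsup hp
  exact ⟨b, hb, hmax, EReal.coe_injective (hfs.symm.trans (fSharp_eq_fSharpReal hB hsup hp))⟩

include hB hsup in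
theorem f_le_fSharpReal {p : X × A} (hp : p.2 ∈ ΦA p.1) {b : B} (hb : b ∈ ΦB p.1 p.2) :
    f (p.1, p.2, b) ≤ fSharpReal ΦB f p := by
  obtain ⟨b', -, hmax, hbg⟩ := exists_isMaxOn_eq_fSharpReal hB hsup hp
  exact hbg ▸ hmax hb

include hB hsup in
theorem isLeast_fSharpReal {p : X × A} (hp : p.2 ∈ ΦA p.1) :
    IsLeast ((fun b => toDual (f (p.1, p.2, b))) '' ΦB p.1 p.2) (toDual (fSharpReal ΦB f p)) := by
  obtain ⟨b, hb, hmax, hbg⟩ := exists_isMaxOn_eq_fSharpReal hB hsup hp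
  rw [← hbg]
  exact IsMinOn.isLeast_image (g := fun b => toDual (f (p.1, p.2, b))) hb hmax

include hAlscB in
theorem isSeqLowerHemicontinuousOn_ΦB :
    IsSeqLowerHemicontinuousOn {p : X × A | p.2 ∈ ΦA p.1} fun p => ΦB p.1 p.2 :=
  fun p _ hp hu hup b hb => hAlscB p.1 _ hup.fst_nhds _ hu p.2 hp b hb

include hB hAlscB hsup hswap in
theorem continuousOn_fSharpReal : ContinuousOn (fSharpReal ΦB f) {p : X × A | p.2 ∈ ΦA p.1} :=
  hsup.continuousOn_of_isLeast (v := fun p => toDual (fSharpReal ΦB f p))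
    (isSeqLowerHemicontinuousOn_ΦB hAlscB)
    (continuous_toDual.comp_continuousOn (continuousOn_f_graph hsup hswap))
    fun _ => isLeast_fSharpReal hB hsup

include hB hsup in
theorem ΦBstar_eq {p : X × A} (hp : p.2 ∈ ΦA p.1) :
    ΦBstar ΦB f p = {b ∈ ΦB p.1 p.2 | f (p.1, p.2, b) = fSharpReal ΦB f p} := by
  ext b
  simp only [ΦBstar, mem_ofPred_eq, fSharp_eq_fSharpReal hB hsup hp, EReal.coe_eq_coe_iff]

include hB hAlscB hsup hswap in
theorem isCompact_ΦBstar {p : X × A} (hp : p.2 ∈ ΦA p.1) : IsCompact (ΦBstar ΦB f p) := by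
  rw [ΦBstar_eq hB hsup hp]
  exact hsup.isCompact_argmin (isSeqLowerHemicontinuousOn_ΦB hAlscB)
    (continuous_toDual.comp_continuousOn (continuousOn_f_graph hsup hswap))
    (fun _ => isLeast_fSharpReal hB hsup) hp

include hB hAlscB hsup hswap in
theorem exists_nhds_ΦBstar_subset {p : X × A} (hp : p.2 ∈ ΦA p.1) {G : Set B} (hG : IsOpen G)
    (hsub : ΦBstar ΦB f p ⊆ G) :
    ∃ U ∈ 𝓝 p, ∀ q ∈ U ∩ {p' : X × A | p'.2 ∈ ΦA p'.1}, ΦBstar ΦB f q ⊆ G := by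
  rw [ΦBstar_eq hB hsup hp] at hsub
  obtain ⟨U, hU, hUG⟩ := hsup.exists_nhds_argmin_subset (isSeqLowerHemicontinuousOn_ΦB hAlscB)
    (continuous_toDual.comp_continuousOn (continuousOn_f_graph hsup hswap))
    (fun _ => isLeast_fSharpReal hB hsup) hp hG hsub
  exact ⟨U, hU, fun q hq => (ΦBstar_eq hB hsup hq.2).trans_subset (hUG q hq)⟩

include hA hB hAlscB hsup hswap in
theorem isSeqKInfCompact_fSharpReal :
    IsSeqKInfCompact univ ΦA fun x a => fSharpReal ΦB f (x, a) := by
  rintro x xs as l - - hxs has hl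
  obtain ⟨a₀, ha₀⟩ := hA x
  obtain ⟨b, hb⟩ := hB x a₀ ha₀
  obtain ⟨bs, hbs, hbc⟩ := hAlscB x xs hxs as has a₀ ha₀ b hb
  obtain ⟨ψ, hψ, hbψ⟩ := hbc.tendsto_subseq
  obtain ⟨a, ⟨ha, -⟩, -, hac⟩ := hswap (u := fun k => (xs (ψ k), bs (ψ k))) (zs := as ∘ ψ)
    ⟨a₀, ha₀, hb⟩ (fun k => ⟨as (ψ k), has _, hbs _⟩)
    ((hxs.comp hψ.tendsto_atTop).prodMk_nhds hbψ) (fun k => ⟨has _, hbs _⟩)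
    (hψ.tendsto_atTop.eventually (hl.mono fun n hn =>
      (f_le_fSharpReal hB hsup (p := (xs n, as n)) (has n) (hbs n)).trans hn))
  have hac : MapClusterPt a atTop as := hac.of_comp hψ.tendsto_atTop
  have hgc := (hxs.prodMk_mapClusterPt hac).continuousWithinAt_comp
    (continuousOn_fSharpReal hB hAlscB hsup hswap (x, a) ha) (Eventually.of_forall has)
  exact ⟨a, ha, isClosed_Iic.mem_of_mapClusterPt hgc hl, hac⟩

include hA hB hAlscB hsup hswap in
theorem exists_isMinOn_vSharp_eq (x : X) :
    ∃ a ∈ ΦA x, IsMinOn (fun a => fSharpReal ΦB f (x, a)) (ΦA x) a ∧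
      vSharp ΦA ΦB f x = fSharpReal ΦB f (x, a) := by
  obtain ⟨a, ha, hmin⟩ :=
    (isSeqKInfCompact_fSharpReal hA hB hAlscB hsup hswap).exists_isMinOn (mem_univ x) (hA x)
  refine ⟨a, ha, hmin, ?_⟩
  rw [vSharp, biInf_congr fun a ha => fSharp_eq_fSharpReal hB hsup (p := (x, a)) ha]
  exact (hmin.comp_mono EReal.coe_strictMono.monotone).biInf_eq ha

include hA hB hAlscB hsup hswap in
theorem vSharp_eq_vSharpReal (x : X) : vSharp ΦA ΦB f x = vSharpReal ΦA ΦB f x := by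
  obtain ⟨a, -, -, hvs⟩ := exists_isMinOn_vSharp_eq hA hB hAlscB hsup hswap x
  rw [vSharpReal, hvs, EReal.toReal_coe]

include hA hB hAlscB hsup hswap in
theorem isLeast_vSharpReal (x : X) :
    IsLeast ((fun a => fSharpReal ΦB f (x, a)) '' ΦA x) (vSharpReal ΦA ΦB f x) := by
  obtain ⟨a, ha, hmin, hvs⟩ := exists_isMinOn_vSharp_eq hA hB hAlscB hsup hswap x
  rw [← EReal.coe_eq_coe_iff.1 (hvs.symm.trans (vSharp_eq_vSharpReal hA hB hAlscB hsup hswap x))]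
  exact hmin.isLeast_image ha

include hAlscmap in
theorem isSeqLowerHemicontinuousOn_ΦA : IsSeqLowerHemicontinuousOn (univ : Set X) ΦA :=
  fun x u _ _ hu a ha => hAlscmap x u hu a ha

include hA hB hAlscmap hAlscB hsup hswap in
theorem continuous_vSharpReal : Continuous (vSharpReal ΦA ΦB f) :=
  continuousOn_univ.1 <|
    (isSeqKInfCompact_fSharpReal hA hB hAlscB hsup hswap).continuousOn_of_isLeast
      (isSeqLowerHemicontinuousOn_ΦA hAlscmap)
      ((continuousOn_fSharpReal hB hAlscB hsup hswap).mono fun _ hq => hq.2)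
      fun x _ => isLeast_vSharpReal hA hB hAlscB hsup hswap x

include hA hB hAlscB hsup hswap in
theorem ΦAstar_eq (x : X) :
    ΦAstar ΦA ΦB f x = {a ∈ ΦA x | fSharpReal ΦB f (x, a) = vSharpReal ΦA ΦB f x} := by
  ext a
  simp only [ΦAstar, mem_ofPred_eq, vSharp_eq_vSharpReal hA hB hAlscB hsup hswap x,
    and_congr_right_iff]
  intro ha
  rw [fSharp_eq_fSharpReal hB hsup (p := (x, a)) ha, EReal.coe_eq_coe_iff]

include hA hB hAlscmap hAlscB hsup hswap in
theorem isCompact_ΦAstar (x : X) : IsCompact (ΦAstar ΦA ΦB f x) := by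
  rw [ΦAstar_eq hA hB hAlscB hsup hswap x]
  exact (isSeqKInfCompact_fSharpReal hA hB hAlscB hsup hswap).isCompact_argmin
    (isSeqLowerHemicontinuousOn_ΦA hAlscmap)
    ((continuousOn_fSharpReal hB hAlscB hsup hswap).mono fun _ hq => hq.2)
    (fun x _ => isLeast_vSharpReal hA hB hAlscB hsup hswap x) (mem_univ x)

include hA hB hAlscmap hAlscB hsup hswap in
theorem exists_nhds_ΦAstar_subset (x : X) {G : Set A} (hG : IsOpen G)
    (hsub : ΦAstar ΦA ΦB f x ⊆ G) : ∃ U ∈ 𝓝 x, ∀ x' ∈ U, ΦAstar ΦA ΦB f x' ⊆ G := by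
  rw [ΦAstar_eq hA hB hAlscB hsup hswap x] at hsub
  obtain ⟨U, hU, hUG⟩ :=
    (isSeqKInfCompact_fSharpReal hA hB hAlscB hsup hswap).exists_nhds_argmin_subset
      (isSeqLowerHemicontinuousOn_ΦA hAlscmap)
      ((continuousOn_fSharpReal hB hAlscB hsup hswap).mono fun _ hq => hq.2)
      (fun x _ => isLeast_vSharpReal hA hB hAlscB hsup hswap x) (mem_univ x) hG hsub
  exact ⟨U, hU, fun x' hx' =>
    (ΦAstar_eq hA hB hAlscB hsup hswap x').trans_subset (hUG x' ⟨hx', mem_univ x'⟩)⟩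

end Game

/-- Theorem 3.8 (extension of Berge's maximum theorem to the minimax setting): if `Φ_A`
is lower semicontinuous, `Φ_B` is `A`-lower semicontinuous, `f` is real-valued and
`K`-sup-compact on `Gr(Φ_B)`, and `f^{A↔B}` is `K`-inf-compact on `Gr(Φ_B^{A↔B})`,
then `f♯` and `v♯` are continuous, the infimum and the suprema are attained, and the
solution multifunctions `Φ_A*` and `Φ_B*` are upper semicontinuous and compact-valued. -/
theorem stmt10
    (ΦA : X → Set A) (hA : ∀ x, (ΦA x).Nonempty)
    (ΦB : X → A → Set B) (hB : ∀ x, ∀ a ∈ ΦA x, (ΦB x a).Nonempty)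
    (hAlscmap : ∀ (x : X) (xs : ℕ → X), Tendsto xs atTop (𝓝 x) →
      ∀ a ∈ ΦA x, ∃ as : ℕ → A, (∀ n, as n ∈ ΦA (xs n)) ∧ MapClusterPt a atTop as)
    (hAlscB : ∀ (x : X) (xs : ℕ → X), Tendsto xs atTop (𝓝 x) →
      ∀ as : ℕ → A, (∀ n, as n ∈ ΦA (xs n)) →
        ∀ a ∈ ΦA x, ∀ b ∈ ΦB x a,
          ∃ bs : ℕ → B, (∀ n, bs n ∈ ΦB (xs n) (as n)) ∧ MapClusterPt b atTop bs)
    (f : X × A × B → ℝ)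
    (hsup : ∀ C : Set (X × A), C.Nonempty → IsCompact C →
      C ⊆ {p : X × A | p.2 ∈ ΦA p.1} →
      ∀ l : ℝ, IsCompact {q : (X × A) × B | q.1 ∈ C ∧ q.2 ∈ ΦB q.1.1 q.1.2 ∧
        l ≤ f (q.1.1, q.1.2, q.2)})
    (hswap : ∀ C : Set (X × B), C.Nonempty → IsCompact C →
      C ⊆ {q : X × B | ∃ a ∈ ΦA q.1, q.2 ∈ ΦB q.1 a} →
      ∀ l : ℝ, IsCompact {r : (X × B) × A | r.1 ∈ C ∧ r.2 ∈ ΦA r.1.1 ∧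
        r.1.2 ∈ ΦB r.1.1 r.2 ∧ f (r.1.1, r.2, r.1.2) ≤ l}) :
    -- (1) continuity of the worst-loss and minimax functions
    ContinuousOn (fSharp ΦB f) {p : X × A | p.2 ∈ ΦA p.1} ∧
    Continuous (vSharp ΦA ΦB f) ∧
    -- (2) the infimum is attained and `Φ_A*` is upper semicontinuous and compact-valued
    (∀ x : X, ∃ a ∈ ΦA x, fSharp ΦB f (x, a) = vSharp ΦA ΦB f x) ∧
    (∀ x : X, IsCompact (ΦAstar ΦA ΦB f x) ∧
      ∀ G : Set A, IsOpen G → ΦAstar ΦA ΦB f x ⊆ G →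
        ∃ U ∈ 𝓝 x, ∀ x' ∈ U, ΦAstar ΦA ΦB f x' ⊆ G) ∧
    -- (3) the suprema are attained and `Φ_B*` is upper semicontinuous and compact-valued
    (∀ p : X × A, p.2 ∈ ΦA p.1 → ∃ b ∈ ΦB p.1 p.2,
      (f (p.1, p.2, b) : EReal) = fSharp ΦB f p) ∧
    (∀ p : X × A, p.2 ∈ ΦA p.1 → IsCompact (ΦBstar ΦB f p) ∧
      ∀ G : Set B, IsOpen G → ΦBstar ΦB f p ⊆ G →
        ∃ U ∈ 𝓝 p, ∀ q ∈ U ∩ {p' : X × A | p'.2 ∈ ΦA p'.1}, ΦBstar ΦB f q ⊆ G) := by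
  have hsup' : IsSeqKInfCompact {p : X × A | p.2 ∈ ΦA p.1} (fun p => ΦB p.1 p.2)
      fun p b => toDual (f (p.1, p.2, b)) :=
    IsKInfCompact.isSeqKInfCompact hsup
  have hswap' : IsSeqKInfCompact {q : X × B | ∃ a ∈ ΦA q.1, q.2 ∈ ΦB q.1 a}
      (fun q => {a | a ∈ ΦA q.1 ∧ q.2 ∈ ΦB q.1 a}) fun q a => f (q.1, a, q.2) :=
    IsKInfCompact.isSeqKInfCompact fun C hC hCc hCS l => by
      simpa only [mem_ofPred_eq, and_assoc] using hswap C hC hCc hCS l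
  refine ⟨?_, ?_, fun x => ?_,
    fun x => ⟨isCompact_ΦAstar hA hB hAlscmap hAlscB hsup' hswap' x,
      fun _ hG => exists_nhds_ΦAstar_subset hA hB hAlscmap hAlscB hsup' hswap' x hG⟩,
    fun p hp => ?_,
    fun p hp => ⟨isCompact_ΦBstar hB hAlscB hsup' hswap' hp,
      fun _ hG => exists_nhds_ΦBstar_subset hB hAlscB hsup' hswap' hp hG⟩⟩
  · exact (continuous_coe_real_ereal.comp_continuousOn
      (continuousOn_fSharpReal hB hAlscB hsup' hswap')).congr
      fun p hp => fSharp_eq_fSharpReal hB hsup' hp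
  · rw [funext (vSharp_eq_vSharpReal hA hB hAlscB hsup' hswap')]
    exact continuous_coe_real_ereal.comp (continuous_vSharpReal hA hB hAlscmap hAlscB hsup' hswap')
  · obtain ⟨a, ha, -, hvs⟩ := exists_isMinOn_vSharp_eq hA hB hAlscB hsup' hswap' x
    exact ⟨a, ha, by rw [hvs, fSharp_eq_fSharpReal hB hsup' ha]⟩
  · obtain ⟨b, hb, -, hfs⟩ := exists_isMaxOn_fSharp_eq hB hsup' hp
    exact ⟨b, hb, hfs.symm⟩
end
end
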